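/- arXiv:2005.08788 — 7 statements merged into one kernel-verified Lean document; each statement's English description precedes it below -/
import Mathlib

section
/- Let d be a positive integer, μ a measure on ℝ^d, t ∈ ℝ, and u : ℝ × ℝ^d → ℝ differentiable at (t,x) for every x. Let η, v : ℝ → ℝ and f₁,…,f_d, q₁,…,q_d : ℝ → ℝ satisfy: η differentiable with η′ = v, and each f_k, q_k differentiable with q_k′(s) = v(s)·f_k′(s) for all s. Define the residual R(x) := ∂_t u(t,x) + Σ_k ∂_{x_k}(f_k∘u)(t,x) and the entropy rate E(x) := ∂_t(η∘u)(t,x) + Σ_k ∂_{x_k}(q_k∘u)(t,x). Let V be a set of functions ℝ^d → ℝ such that for every w ∈ V the function w·R is μ-integrable and ∫ w(x) R(x) dμ = 0, and assume E and (v∘u(t,·))·R are μ-integrable. Then for every w ∈ V: ∫ E dμ = ∫ ( v(u(t,x)) − w(x) ) R(x) dμ. -/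
/-!
Both the entropy rate and the residual are sums of derivatives of compositions with `u`.
The compatibility conditions `η' = v` and `q_k' = v f_k'` turn the chain rule into the pointwise
identity `E = v(u) R`, so the entropy production is the residual tested against `v(u)`;
Galerkin orthogonality lets one subtract any `w ∈ V` from that test function.
-/

open MeasureTheory

theorem deriv_comp_eq_mul_deriv_comp {q f g v : ℝ → ℝ} {s : ℝ}
    (hq : DifferentiableAt ℝ q (g s)) (hf : DifferentiableAt ℝ f (g s))
    (hg : DifferentiableAt ℝ g s) (hqf : deriv q (g s) = v (g s) * deriv f (g s)) :
    deriv (fun r => q (g r)) s = v (g s) * deriv (fun r => f (g r)) s := by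
  rw [← Function.comp_def q g, ← Function.comp_def f g, deriv_comp s hq hg,
    deriv_comp s hf hg, hqf, mul_assoc]

theorem DifferentiableAt.comp_time {E : Type*} [NormedAddCommGroup E] [NormedSpace ℝ E]
    {u : ℝ × E → ℝ} {t : ℝ} {x : E} (hu : DifferentiableAt ℝ u (t, x)) :
    DifferentiableAt ℝ (fun s => u (s, x)) t :=
  hu.comp t (differentiableAt_id.prodMk (differentiableAt_const x))

theorem DifferentiableAt.comp_update {ι : Type*} [Fintype ι] [DecidableEq ι]
    {u : ℝ × (ι → ℝ) → ℝ} {t : ℝ} {x : ι → ℝ} (hu : DifferentiableAt ℝ u (t, x)) (k : ι) :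
    DifferentiableAt ℝ (fun s => u (t, Function.update x k s)) (x k) := by
  have hcurve : DifferentiableAt ℝ (fun s : ℝ => (t, Function.update x k s)) (x k) :=
    (differentiableAt_const t).prodMk (hasDerivAt_update x k (x k)).differentiableAt
  rw [← Function.update_eq_self k x] at hu
  exact hu.comp (x k) hcurve

theorem entropy_rate_eq_mul_residual {ι : Type*} [Fintype ι] [DecidableEq ι]
    {u : ℝ × (ι → ℝ) → ℝ} {t : ℝ} {x : ι → ℝ} (hu : DifferentiableAt ℝ u (t, x))
    {η v : ℝ → ℝ} {f q : ι → ℝ → ℝ} (hη : Differentiable ℝ η) (hηv : ∀ s, deriv η s = v s)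
    (hf : ∀ k, Differentiable ℝ (f k)) (hq : ∀ k, Differentiable ℝ (q k))
    (hqf : ∀ k s, deriv (q k) s = v s * deriv (f k) s) :
    deriv (fun s => η (u (s, x))) t +
        ∑ k, deriv (fun s => q k (u (t, Function.update x k s))) (x k) =
      v (u (t, x)) * (deriv (fun s => u (s, x)) t +
        ∑ k, deriv (fun s => f k (u (t, Function.update x k s))) (x k)) := by
  have htime : deriv (fun s => η (u (s, x))) t = v (u (t, x)) * deriv (fun s => u (s, x)) t :=
    deriv_comp_eq_mul_deriv_comp (f := id) (hη _) differentiableAt_id hu.comp_time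
      (by simp [hηv])
  have hflux (k : ι) : deriv (fun s => q k (u (t, Function.update x k s))) (x k) =
      v (u (t, x)) * deriv (fun s => f k (u (t, Function.update x k s))) (x k) := by
    simpa using deriv_comp_eq_mul_deriv_comp (hq k _) (hf k _) (hu.comp_update k) (hqf k _)
  rw [htime, Finset.sum_congr rfl fun k _ => hflux k, mul_add, Finset.mul_sum]

theorem integral_sub_mul_eq_of_integral_mul_eq_zero {α : Type*} [MeasurableSpace α]
    {μ : Measure α} {a w R : α → ℝ} (ha : Integrable (fun x => a x * R x) μ)
    (hw : Integrable (fun x => w x * R x) μ) (horth : ∫ x, w x * R x ∂μ = 0) :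
    ∫ x, (a x - w x) * R x ∂μ = ∫ x, a x * R x ∂μ := by
  simp only [sub_mul]
  rw [integral_sub ha hw, horth, sub_zero]

theorem entropy_balance_CG_general
    (d : ℕ) (μ : Measure (Fin d → ℝ)) (t : ℝ)
    (u : ℝ × (Fin d → ℝ) → ℝ)
    (hu : ∀ x : Fin d → ℝ, DifferentiableAt ℝ u (t, x))
    (η v : ℝ → ℝ) (f q : Fin d → ℝ → ℝ)
    (hη : Differentiable ℝ η) (hηv : ∀ s, deriv η s = v s)
    (hf : ∀ k, Differentiable ℝ (f k))
    (hq : ∀ k, Differentiable ℝ (q k))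
    (hqf : ∀ k s, deriv (q k) s = v s * deriv (f k) s)
    (R E : (Fin d → ℝ) → ℝ)
    (hR : ∀ x, R x = deriv (fun s => u (s, x)) t +
      ∑ k, deriv (fun s => f k (u (t, Function.update x k s))) (x k))
    (hE : ∀ x, E x = deriv (fun s => η (u (s, x))) t +
      ∑ k, deriv (fun s => q k (u (t, Function.update x k s))) (x k))
    (V : Set ((Fin d → ℝ) → ℝ))
    (hVint : ∀ w ∈ V, Integrable (fun x => w x * R x) μ)
    (hGal : ∀ w ∈ V, ∫ x, w x * R x ∂μ = 0)
    (hvRint : Integrable (fun x => v (u (t, x)) * R x) μ) :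
    ∀ w ∈ V, ∫ x, E x ∂μ = ∫ x, (v (u (t, x)) - w x) * R x ∂μ := by
  intro w hw
  have hEvR : E = fun x => v (u (t, x)) * R x := by
    funext x
    rw [hE, hR, entropy_rate_eq_mul_residual (hu x) hη hηv hf hq hqf]
  rw [integral_sub_mul_eq_of_integral_mul_eq_zero hvRint (hVint w hw) (hGal w hw), hEvR]

/-- Theorem 1 of the paper (entropy behavior of the continuous Galerkin method):
Galerkin orthogonality `∫ w R dμ = 0` for all test functions `w ∈ V` implies
that the total entropy production equals the weighted residual
`∫ (v(u(t,·)) − w) R dμ` for any `w ∈ V`. -/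
theorem entropy_balance_CG
    (d : ℕ) (hd : 0 < d) (μ : Measure (Fin d → ℝ)) (t : ℝ)
    (u : ℝ × (Fin d → ℝ) → ℝ)
    (hu : ∀ x : Fin d → ℝ, DifferentiableAt ℝ u (t, x))
    (η v : ℝ → ℝ) (f q : Fin d → ℝ → ℝ)
    (hη : Differentiable ℝ η) (hηv : ∀ s, deriv η s = v s)
    (hf : ∀ k, Differentiable ℝ (f k))
    (hq : ∀ k, Differentiable ℝ (q k))
    (hqf : ∀ k s, deriv (q k) s = v s * deriv (f k) s)
    (R E : (Fin d → ℝ) → ℝ)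
    (hR : ∀ x, R x = deriv (fun s => u (s, x)) t +
      ∑ k, deriv (fun s => f k (u (t, Function.update x k s))) (x k))
    (hE : ∀ x, E x = deriv (fun s => η (u (s, x))) t +
      ∑ k, deriv (fun s => q k (u (t, Function.update x k s))) (x k))
    (V : Set ((Fin d → ℝ) → ℝ))
    (hVint : ∀ w ∈ V, Integrable (fun x => w x * R x) μ)
    (hGal : ∀ w ∈ V, ∫ x, w x * R x ∂μ = 0)
    (hEint : Integrable E μ)
    (hvRint : Integrable (fun x => v (u (t, x)) * R x) μ) :
    ∀ w ∈ V, ∫ x, E x ∂μ = ∫ x, (v (u (t, x)) - w x) * R x ∂μ :=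
  entropy_balance_CG_general d μ t u hu η v f q hη hηv hf hq hqf R E hR hE V hVint hGal hvRint
end

section
/- Let d be a positive integer, μ a measure on ℝ^d, t ∈ ℝ, and u : ℝ × ℝ^d → ℝ differentiable at (t,x) for every x. Let η(s) = s²/2 (so the entropy variable is v(s) = s) and let f₁,…,f_d, q₁,…,q_d : ℝ → ℝ be differentiable with q_k′(s) = s·f_k′(s) for all s. Define R(x) := ∂_t u(t,x) + Σ_k ∂_{x_k}(f_k∘u)(t,x) and E(x) := ∂_t(η∘u)(t,x) + Σ_k ∂_{x_k}(q_k∘u)(t,x), and assume E and u(t,·)·R are μ-integrable. Let V be a set of functions ℝ^d → ℝ with ∫ w R dμ = 0 for all w ∈ V (with w·R μ-integrable), and suppose the function x ↦ u(t,x) belongs to V. Then ∫ E dμ = 0. -/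
open MeasureTheory

/-!
For the square entropy the entropy variable is `u` itself, and the compatibility condition
`q_k' = s f_k'` makes the chain rule give `∂(q_k ∘ u) = u ∂(f_k ∘ u)` and `∂(η ∘ u) = u ∂u`.
Hence the entropy residual is pointwise `u(t,·)` times the residual of the conservation law,
and its integral is the Galerkin orthogonality relation tested against `u(t,·) ∈ V`.
-/

section Calculus

variable {𝕜 : Type*} [NontriviallyNormedField 𝕜]

theorem deriv_comp_eq_mul_deriv_comp_s2 {F Q g : 𝕜 → 𝕜} {a F' : 𝕜}
    (hF : HasDerivAt F F' (g a)) (hQ : HasDerivAt Q (g a * F') (g a))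
    (hg : DifferentiableAt 𝕜 g a) :
    deriv (fun s => Q (g s)) a = g a * deriv (fun s => F (g s)) a := by
  have hQg : HasDerivAt (fun s => Q (g s)) (g a * F' * deriv g a) a :=
    hQ.comp a hg.hasDerivAt
  have hFg : HasDerivAt (fun s => F (g s)) (F' * deriv g a) a := hF.comp a hg.hasDerivAt
  rw [hQg.deriv, hFg.deriv, mul_assoc]

variable {E G : Type*} [NormedAddCommGroup E] [NormedSpace 𝕜 E]
  [NormedAddCommGroup G] [NormedSpace 𝕜 G]

theorem DifferentiableAt.comp_prodMk_const {u : 𝕜 × E → G} {t : 𝕜} {x : E}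
    (hu : DifferentiableAt 𝕜 u (t, x)) :
    DifferentiableAt 𝕜 (fun s => u (s, x)) t :=
  hu.comp t (differentiableAt_id.prodMk (differentiableAt_const x))

theorem DifferentiableAt.comp_const_prodMk_update {ι : Type*} [Fintype ι] [DecidableEq ι]
    {u : E × (ι → 𝕜) → G} {t : E} {x : ι → 𝕜} (hu : DifferentiableAt 𝕜 u (t, x)) (k : ι) :
    DifferentiableAt 𝕜 (fun s => u (t, Function.update x k s)) (x k) := by
  rw [← Function.update_eq_self k x] at hu
  exact hu.comp (x k) ((differentiableAt_const t).prodMk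
    (hasDerivAt_update x k (x k)).differentiableAt)

end Calculus

theorem entropy_conservation_CG_square_entropy_general
    (d : ℕ) (μ : Measure (Fin d → ℝ)) (t : ℝ)
    (u : ℝ × (Fin d → ℝ) → ℝ)
    (hu : ∀ x : Fin d → ℝ, DifferentiableAt ℝ u (t, x))
    (η : ℝ → ℝ) (hη : ∀ s, η s = s ^ 2 / 2)
    (f q : Fin d → ℝ → ℝ)
    (hf : ∀ k, Differentiable ℝ (f k))
    (hq : ∀ k, Differentiable ℝ (q k))
    (hqf : ∀ k s, deriv (q k) s = s * deriv (f k) s)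
    (R E : (Fin d → ℝ) → ℝ)
    (hR : ∀ x, R x = deriv (fun s => u (s, x)) t +
      ∑ k, deriv (fun s => f k (u (t, Function.update x k s))) (x k))
    (hE : ∀ x, E x = deriv (fun s => η (u (s, x))) t +
      ∑ k, deriv (fun s => q k (u (t, Function.update x k s))) (x k))
    (V : Set ((Fin d → ℝ) → ℝ))
    (hGal : ∀ w ∈ V, ∫ x, w x * R x ∂μ = 0)
    (hmem : (fun x => u (t, x)) ∈ V) :
    ∫ x, E x ∂μ = 0 := by
  obtain rfl : η = fun s => s ^ 2 / 2 := funext hη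
  have hη_deriv (y : ℝ) : HasDerivAt (fun s : ℝ => s ^ 2 / 2) (y * 1) y := by
    simpa using (hasDerivAt_pow 2 y).div_const 2
  have hq_deriv (k : Fin d) (y : ℝ) : HasDerivAt (q k) (y * deriv (f k) y) y := by
    rw [← hqf]
    exact (hq k y).hasDerivAt
  have hE_eq (x : Fin d → ℝ) : E x = u (t, x) * R x := by
    rw [hE, hR, mul_add, Finset.mul_sum]
    congr 1
    · exact deriv_comp_eq_mul_deriv_comp_s2 (F := id) (hasDerivAt_id _) (hη_deriv _)
        (hu x).comp_prodMk_const
    · refine Finset.sum_congr rfl fun k _ => ?_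
      have := deriv_comp_eq_mul_deriv_comp_s2 ((hf k _).hasDerivAt) (hq_deriv k _)
        ((hu x).comp_const_prodMk_update k)
      rwa [Function.update_eq_self] at this
  calc ∫ x, E x ∂μ = ∫ x, u (t, x) * R x ∂μ := integral_congr_ae (.of_forall hE_eq)
    _ = 0 := hGal _ hmem

/-- Corollary to Theorem 1: the standard continuous Galerkin method is entropy
conservative for the square entropy `η(u) = u²/2` (entropy variable `v(u) = u`),
because `u(t,·)` lies in the test space, so the entropy production vanishes. -/
theorem entropy_conservation_CG_square_entropy
    (d : ℕ) (hd : 0 < d) (μ : Measure (Fin d → ℝ)) (t : ℝ)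
    (u : ℝ × (Fin d → ℝ) → ℝ)
    (hu : ∀ x : Fin d → ℝ, DifferentiableAt ℝ u (t, x))
    (η : ℝ → ℝ) (hη : ∀ s, η s = s ^ 2 / 2)
    (f q : Fin d → ℝ → ℝ)
    (hf : ∀ k, Differentiable ℝ (f k))
    (hq : ∀ k, Differentiable ℝ (q k))
    (hqf : ∀ k s, deriv (q k) s = s * deriv (f k) s)
    (R E : (Fin d → ℝ) → ℝ)
    (hR : ∀ x, R x = deriv (fun s => u (s, x)) t +
      ∑ k, deriv (fun s => f k (u (t, Function.update x k s))) (x k))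
    (hE : ∀ x, E x = deriv (fun s => η (u (s, x))) t +
      ∑ k, deriv (fun s => q k (u (t, Function.update x k s))) (x k))
    (hEint : Integrable E μ)
    (huRint : Integrable (fun x => u (t, x) * R x) μ)
    (V : Set ((Fin d → ℝ) → ℝ))
    (hVint : ∀ w ∈ V, Integrable (fun x => w x * R x) μ)
    (hGal : ∀ w ∈ V, ∫ x, w x * R x ∂μ = 0)
    (hmem : (fun x => u (t, x)) ∈ V) :
    ∫ x, E x ∂μ = 0 :=
  entropy_conservation_CG_square_entropy_general d μ t u hu η hη f q hf hq hqf R E hR hE V hGal hmem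
end

section
/- Let d be a positive integer and ι a finite index set (the nodes of one element). For each i ∈ ι let u_i, v_i ∈ ℝ and f_i, q_i ∈ ℝ^d, and set ψ_i := v_i·f_i − q_i ∈ ℝ^d. Let c̃ : ι × ι → ℝ^d satisfy the zero row sum condition Σ_{j∈ι} c̃_{ij} = 0 for every i, let g̃ : ι × ι → ℝ, and let p̃ : ι × ι → ℝ. Assume the local entropy stability condition: for all i ≠ j, ((v_i − v_j)/2)·[ g̃_{ij} − c̃_{ij}·(f_j + f_i) ] − c̃_{ij}·(ψ_j − ψ_i) ≤ p̃_{ij}. Then Σ_{i∈ι} v_i Σ_{j≠i} [ g̃_{ij} − c̃_{ij}·(f_j − f_i) ] ≤ Σ_{i∈ι} Σ_{j≠i} [ ((v_i + v_j)/2)·g̃_{ij} − c̃_{ij}·( ((v_i − v_j)/2)·(f_j − f_i) + q_j − q_i ) + p̃_{ij} ], where · denotes the dot product in ℝ^d. -/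
/-- Dot product in `ℝ^d`. -/
def dot {d : ℕ} (x y : Fin d → ℝ) : ℝ := ∑ k, x k * y k

lemma dot_add {d : ℕ} (c x y : Fin d → ℝ) : dot c (x + y) = dot c x + dot c y := by
  simp [dot, mul_add, Finset.sum_add_distrib]

lemma dot_sub {d : ℕ} (c x y : Fin d → ℝ) : dot c (x - y) = dot c x - dot c y := by
  simp [dot, mul_sub, Finset.sum_sub_distrib]

lemma dot_smul {d : ℕ} (a : ℝ) (c x : Fin d → ℝ) : dot c (a • x) = a * dot c x := by
  simp [dot, Finset.mul_sum]; apply Finset.sum_congr rfl; intros; ring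

/-- Per-element estimate from the proof of Theorem 3: under the zero row sum
condition on the lumped gradient coefficients and the local entropy stability
condition, the rate of entropy production in an element is bounded. -/
theorem element_entropy_estimate
    (d : ℕ) (hd : 0 < d) {ι : Type*} [Fintype ι] [DecidableEq ι]
    (u v : ι → ℝ) (f q ψ : ι → Fin d → ℝ)
    (hψ : ∀ i, ψ i = v i • f i - q i)
    (ctil : ι → ι → Fin d → ℝ)
    (hrow : ∀ i, ∑ j, ctil i j = 0)
    (gtil ptil : ι → ι → ℝ)
    (hES : ∀ i j, i ≠ j →
      (v i - v j) / 2 * (gtil i j - dot (ctil i j) (f j + f i)) -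
        dot (ctil i j) (ψ j - ψ i) ≤ ptil i j) :
    ∑ i, v i * ∑ j ∈ Finset.univ.erase i, (gtil i j - dot (ctil i j) (f j - f i)) ≤
      ∑ i, ∑ j ∈ Finset.univ.erase i,
        ((v i + v j) / 2 * gtil i j -
          dot (ctil i j) (((v i - v j) / 2) • (f j - f i) + q j - q i) + ptil i j) := by
  apply Finset.sum_le_sum
  intro i _
  rw [Finset.mul_sum]
  apply Finset.sum_le_sum
  intro j hj
  have hij : i ≠ j := (Finset.ne_of_mem_erase hj).symm
  have h := hES i j hij
  have hpsi : ψ j - ψ i = (v j • f j - v i • f i) - (q j - q i) := by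
    rw [hψ i, hψ j]; abel
  rw [hpsi] at h
  simp only [dot_sub, dot_add, dot_smul] at h
  simp only [dot_sub, dot_add, dot_smul]
  linarith
end

section
/- Let d be a positive integer, ε a finite set (elements) and ι a finite set (nodes). For each i ∈ ι let u_i, v_i, u̇_i ∈ ℝ and f_i, q_i ∈ ℝ^d, and set ψ_i := v_i·f_i − q_i. For each e ∈ ε let m^e : ι → ℝ, c^e, c̃^e : ι × ι → ℝ^d, g̃^e : ι × ι → ℝ, p̃^e : ι × ι → ℝ. Assume: (i) zero row sums: Σ_j c̃^e_{ij} = 0 for all e, i; (ii) the local entropy stability condition: for all e and all i ≠ j, ((v_i − v_j)/2)·[ g̃^e_{ij} − c̃^e_{ij}·(f_j + f_i) ] − c̃^e_{ij}·(ψ_j − ψ_i) ≤ p̃^e_{ij}; (iii) the production-bound condition: for all e, Σ_i Σ_{j≠i} p̃^e_{ij} ≤ Σ_i Σ_{j≠i} (c̃^e_{ij} − c^e_{ij})·[ ((v_i − v_j)/2)·(f_j − f_i) + q_j − q_i ]; (iv) the semi-discrete scheme: for all i, Σ_e m^e_i·u̇_i = Σ_e Σ_{j≠i} [ g̃^e_{ij}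 − c̃^e_{ij}·(f_j − f_i) ]. Then Σ_e Σ_i m^e_i·v_i·u̇_i ≤ Σ_e Σ_i Σ_{j≠i} [ G^e_{ij} − c^e_{ij}·(q_j − q_i) ], where G^e_{ij} := ((v_i + v_j)/2)·g̃^e_{ij} − ((v_i − v_j)/2)·c^e_{ij}·(f_j − f_i). -/
lemma dot_sub_right {d : ℕ} (x y z : Fin d → ℝ) : dot x (y - z) = dot x y - dot x z := by
  simp [dot, mul_sub, Finset.sum_sub_distrib]

lemma dot_add_right {d : ℕ} (x y z : Fin d → ℝ) : dot x (y + z) = dot x y + dot x z := by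
  simp [dot, mul_add, Finset.sum_add_distrib]

lemma dot_sub_left {d : ℕ} (x y z : Fin d → ℝ) : dot (x - y) z = dot x z - dot y z := by
  simp [dot, sub_mul, Finset.sum_sub_distrib]

lemma dot_smul_right {d : ℕ} (a : ℝ) (x y : Fin d → ℝ) : dot x (a • y) = a * dot x y := by
  simp [dot, Finset.mul_sum, mul_left_comm]

/-- Theorem 3 (entropy correction via subcell flux limiting) in algebraic form:
under the zero row sum, local entropy stability and production-bound
conditions, the flux-corrected semi-discrete scheme satisfies a discrete
entropy inequality. -/
theorem entropy_correction_subcell_flux_limiting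
    (d : ℕ) (hd : 0 < d)
    {ε ι : Type*} [Fintype ε] [Fintype ι] [DecidableEq ι]
    (u v udot : ι → ℝ) (f q ψ : ι → Fin d → ℝ)
    (hψ : ∀ i, ψ i = v i • f i - q i)
    (m : ε → ι → ℝ)
    (c ctil : ε → ι → ι → Fin d → ℝ)
    (gtil ptil : ε → ι → ι → ℝ)
    (hrow : ∀ e i, ∑ j, ctil e i j = 0)
    (hES : ∀ e, ∀ i j, i ≠ j →
      (v i - v j) / 2 * (gtil e i j - dot (ctil e i j) (f j + f i)) -
        dot (ctil e i j) (ψ j - ψ i) ≤ ptil e i j)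
    (hPB : ∀ e, ∑ i, ∑ j ∈ Finset.univ.erase i, ptil e i j ≤
      ∑ i, ∑ j ∈ Finset.univ.erase i,
        dot (ctil e i j - c e i j)
          (((v i - v j) / 2) • (f j - f i) + q j - q i))
    (hscheme : ∀ i, ∑ e, m e i * udot i =
      ∑ e, ∑ j ∈ Finset.univ.erase i,
        (gtil e i j - dot (ctil e i j) (f j - f i))) :
    ∑ e, ∑ i, m e i * v i * udot i ≤
      ∑ e, ∑ i, ∑ j ∈ Finset.univ.erase i,
        (((v i + v j) / 2 * gtil e i j -
            (v i - v j) / 2 * dot (c e i j) (f j - f i)) -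
          dot (c e i j) (q j - q i)) := by
  classical
  -- pointwise key inequality
  have key : ∀ e, ∀ i j, i ≠ j →
      v i * (gtil e i j - dot (ctil e i j) (f j - f i)) ≤
        ((((v i + v j) / 2 * gtil e i j -
            (v i - v j) / 2 * dot (c e i j) (f j - f i)) -
          dot (c e i j) (q j - q i)) + ptil e i j -
          dot (ctil e i j - c e i j)
            (((v i - v j) / 2) • (f j - f i) + q j - q i)) := by
    intro e i j hij
    have hE := hES e i j hij
    have heq : v i * (gtil e i j - dot (ctil e i j) (f j - f i)) =
        ((((v i + v j) / 2 * gtil e i j -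
            (v i - v j) / 2 * dot (c e i j) (f j - f i)) -
          dot (c e i j) (q j - q i)) +
          ((v i - v j) / 2 * (gtil e i j - dot (ctil e i j) (f j + f i)) -
            dot (ctil e i j) (ψ j - ψ i)) -
          dot (ctil e i j - c e i j)
            (((v i - v j) / 2) • (f j - f i) + q j - q i)) := by
      simp only [hψ, dot_sub_right, dot_add_right, dot_sub_left, dot_smul_right]
      ring
    linarith
  -- rewrite the LHS using the scheme
  have h1 : ∑ e, ∑ i, m e i * v i * udot i =
      ∑ e, ∑ i, ∑ j ∈ Finset.univ.erase i,
        v i * (gtil e i j - dot (ctil e i j) (f j - f i)) := by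
    rw [Finset.sum_comm]
    rw [show (∑ e : ε, ∑ i : ι, ∑ j ∈ Finset.univ.erase i,
        v i * (gtil e i j - dot (ctil e i j) (f j - f i))) =
      ∑ i : ι, ∑ e : ε, ∑ j ∈ Finset.univ.erase i,
        v i * (gtil e i j - dot (ctil e i j) (f j - f i)) from Finset.sum_comm]
    refine Finset.sum_congr rfl fun i _ => ?_
    have : ∑ e : ε, m e i * v i * udot i = v i * ∑ e : ε, m e i * udot i := by
      rw [Finset.mul_sum]; exact Finset.sum_congr rfl fun e _ => by ring
    rw [this, hscheme i, Finset.mul_sum]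
    exact Finset.sum_congr rfl fun e _ => by rw [Finset.mul_sum]
  rw [h1]
  have h2 : ∀ e : ε,
      (∑ i, ∑ j ∈ Finset.univ.erase i,
        v i * (gtil e i j - dot (ctil e i j) (f j - f i))) ≤
      ∑ i, ∑ j ∈ Finset.univ.erase i,
        (((v i + v j) / 2 * gtil e i j -
            (v i - v j) / 2 * dot (c e i j) (f j - f i)) -
          dot (c e i j) (q j - q i)) := by
    intro e
    have hle : (∑ i, ∑ j ∈ Finset.univ.erase i,
        v i * (gtil e i j - dot (ctil e i j) (f j - f i))) ≤
      ∑ i, ∑ j ∈ Finset.univ.erase i,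
        ((((v i + v j) / 2 * gtil e i j -
            (v i - v j) / 2 * dot (c e i j) (f j - f i)) -
          dot (c e i j) (q j - q i)) + ptil e i j -
          dot (ctil e i j - c e i j)
            (((v i - v j) / 2) • (f j - f i) + q j - q i)) := by
      refine Finset.sum_le_sum fun i _ => Finset.sum_le_sum fun j hj => ?_
      exact key e i j (Finset.ne_of_mem_erase hj).symm
    have hsplit : (∑ i, ∑ j ∈ Finset.univ.erase i,
        ((((v i + v j) / 2 * gtil e i j -
            (v i - v j) / 2 * dot (c e i j) (f j - f i)) -
          dot (c e i j) (q j - q i)) + ptil e i j -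
          dot (ctil e i j - c e i j)
            (((v i - v j) / 2) • (f j - f i) + q j - q i))) =
        (∑ i, ∑ j ∈ Finset.univ.erase i,
          (((v i + v j) / 2 * gtil e i j -
            (v i - v j) / 2 * dot (c e i j) (f j - f i)) -
          dot (c e i j) (q j - q i))) +
        ((∑ i, ∑ j ∈ Finset.univ.erase i, ptil e i j) -
          ∑ i, ∑ j ∈ Finset.univ.erase i,
            dot (ctil e i j - c e i j)
              (((v i - v j) / 2) • (f j - f i) + q j - q i)) := by
      simp [Finset.sum_add_distrib, Finset.sum_sub_distrib]
      ring
    have hpb := hPB e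
    linarith [hle, hsplit.le, hsplit.ge]
  calc ∑ e, ∑ i, ∑ j ∈ Finset.univ.erase i,
        v i * (gtil e i j - dot (ctil e i j) (f j - f i))
      ≤ _ := Finset.sum_le_sum fun e _ => h2 e
end

section
/- Let d be a positive integer, ε a finite set (elements) and ι a finite set (nodes). For each i ∈ ι let v_i ∈ ℝ and f_i, q_i ∈ ℝ^d. For each e ∈ ε let c^e : ι × ι → ℝ^d and g̃^e : ι × ι → ℝ. Assume: (i) g̃^e_{ij} + g̃^e_{ji} = 0 for all e, i, j (flux antisymmetry); (ii) Σ_e ( c^e_{ij} + c^e_{ji} ) = 0 for all i, j (assembled skew symmetry); (iii) Σ_j c^e_{ij} = 0 for all e, i (zero row sums). Then Σ_e Σ_i Σ_{j≠i} [ ((v_i + v_j)/2)·g̃^e_{ij} − c^e_{ij}·( ((v_i − v_j)/2)·(f_j − f_i) + q_j − q_i ) ] = 0. -/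
lemma dot_lin {d : ℕ} (x w y z : Fin d → ℝ) (a : ℝ) :
    dot x (a • w + y - z) = a * dot x w + dot x y - dot x z := by
  simp only [dot, Pi.add_apply, Pi.sub_apply, Pi.smul_apply, smul_eq_mul]
  rw [Finset.mul_sum, ← Finset.sum_add_distrib, ← Finset.sum_sub_distrib]
  exact Finset.sum_congr rfl fun k _ => by ring

lemma dot_sum_left {d : ℕ} {α : Type*} [Fintype α] (c : α → Fin d → ℝ)
    (y : Fin d → ℝ) : dot (∑ e, c e) y = ∑ e, dot (c e) y := by
  simp only [dot, Finset.sum_apply, Finset.sum_mul]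
  exact Finset.sum_comm

lemma dot_zero_left {d : ℕ} (y : Fin d → ℝ) : dot (0 : Fin d → ℝ) y = 0 := by
  simp [dot]

lemma dot_neg_left {d : ℕ} (x y : Fin d → ℝ) : dot (-x) y = - dot x y := by
  simp [dot, Finset.sum_neg_distrib]

/-- A double sum of a pairwise antisymmetric family vanishes. -/
lemma sum_antisym {ι : Type*} [Fintype ι] (h : ι → ι → ℝ)
    (H : ∀ i j, h i j + h j i = 0) : ∑ i, ∑ j, h i j = 0 := by
  have h2 : (∑ i, ∑ j, h i j) = ∑ i, ∑ j, h j i := Finset.sum_comm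
  have h3 : (∑ i, ∑ j, h i j) + (∑ i, ∑ j, h j i)
      = ∑ i, ∑ j, (h i j + h j i) := by
    rw [← Finset.sum_add_distrib]
    exact Finset.sum_congr rfl fun i _ => (Finset.sum_add_distrib).symm
  simp only [H] at h3
  simp only [Finset.sum_const_zero] at h3
  linarith

/-- Identity from the Remark after Theorem 3 (eq. (detadt)): under flux
antisymmetry, assembled skew symmetry and zero row sums, the total entropy
production bound vanishes. -/
theorem total_entropy_production_vanishes
    (d : ℕ) (hd : 0 < d)
    {ε ι : Type*} [Fintype ε] [Fintype ι] [DecidableEq ι]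
    (v : ι → ℝ) (f q : ι → Fin d → ℝ)
    (c : ε → ι → ι → Fin d → ℝ)
    (gtil : ε → ι → ι → ℝ)
    (hanti : ∀ e i j, gtil e i j + gtil e j i = 0)
    (hskew : ∀ i j, ∑ e, (c e i j + c e j i) = 0)
    (hrow : ∀ e i, ∑ j, c e i j = 0) :
    ∑ e, ∑ i, ∑ j ∈ Finset.univ.erase i,
      ((v i + v j) / 2 * gtil e i j -
        dot (c e i j) (((v i - v j) / 2) • (f j - f i) + q j - q i)) = 0 := by
  -- diagonal entries of gtil vanish
  have hgdiag : ∀ e i, gtil e i i = 0 := fun e i => by have := hanti e i i; linarith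
  -- the diagonal summand vanishes, so erase sums equal full sums
  have hdiag : ∀ e i, ((v i + v i) / 2 * gtil e i i -
      dot (c e i i) (((v i - v i) / 2) • (f i - f i) + q i - q i)) = 0 := by
    intro e i
    rw [dot_lin, hgdiag]
    simp
  have h1 : (∑ e, ∑ i, ∑ j ∈ Finset.univ.erase i,
      ((v i + v j) / 2 * gtil e i j -
        dot (c e i j) (((v i - v j) / 2) • (f j - f i) + q j - q i)))
      = ∑ e, ∑ i, ∑ j,
      ((v i + v j) / 2 * gtil e i j -
        dot (c e i j) (((v i - v j) / 2) • (f j - f i) + q j - q i)) := by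
    refine Finset.sum_congr rfl fun e _ => Finset.sum_congr rfl fun i _ => ?_
    exact Finset.sum_erase _ (hdiag e i)
  rw [h1]
  -- expand the dot product
  have h2 : (∑ e, ∑ i, ∑ j,
      ((v i + v j) / 2 * gtil e i j -
        dot (c e i j) (((v i - v j) / 2) • (f j - f i) + q j - q i)))
      = ∑ e, ∑ i, ∑ j,
      ((((v i + v j) / 2 * gtil e i j -
        (v i - v j) / 2 * dot (c e i j) (f j - f i)) -
        dot (c e i j) (q j)) + dot (c e i j) (q i)) := by
    refine Finset.sum_congr rfl fun e _ => Finset.sum_congr rfl fun i _ =>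
      Finset.sum_congr rfl fun j _ => ?_
    rw [dot_lin]
    ring
  rw [h2]
  simp only [Finset.sum_add_distrib, Finset.sum_sub_distrib]
  -- consolidated coefficients
  have hC : ∀ i j, (∑ e, c e i j) + (∑ e, c e j i) = 0 := by
    intro i j
    rw [← Finset.sum_add_distrib]
    exact hskew i j
  have hCneg : ∀ i j, (∑ e, c e j i) = -∑ e, c e i j := by
    intro i j
    have := hC i j
    linear_combination this
  -- piece G : the gtil part vanishes
  have hG : (∑ e, ∑ i, ∑ j, (v i + v j) / 2 * gtil e i j) = 0 := by
    refine Finset.sum_eq_zero fun e _ => ?_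
    refine sum_antisym _ fun i j => ?_
    linear_combination ((v i + v j) / 2) * hanti e i j
  -- piece Q : the f part vanishes
  have hQ : (∑ e, ∑ i, ∑ j, (v i - v j) / 2 * dot (c e i j) (f j - f i)) = 0 := by
    have hre : (∑ e, ∑ i, ∑ j, (v i - v j) / 2 * dot (c e i j) (f j - f i))
        = ∑ i, ∑ j, (v i - v j) / 2 * dot (∑ e, c e i j) (f j - f i) := by
      rw [Finset.sum_comm]
      refine Finset.sum_congr rfl fun i _ => ?_
      rw [Finset.sum_comm]
      refine Finset.sum_congr rfl fun j _ => ?_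
      rw [dot_sum_left, Finset.mul_sum]
    rw [hre]
    refine sum_antisym _ fun i j => ?_
    rw [hCneg i j, dot_neg_left]
    have : dot (∑ e, c e i j) (f i - f j) = - dot (∑ e, c e i j) (f j - f i) := by
      rw [dot_sub_right, dot_sub_right]; ring
    rw [this]
    ring
  -- piece P2 : the (q j) part vanishes
  have hCol : ∀ j, (∑ e, ∑ i, c e i j) = 0 := by
    intro j
    have : (∑ e, ∑ i, c e i j) = ∑ i, ∑ e, c e i j := Finset.sum_comm
    rw [this]
    have h4 : (∑ i, ∑ e, c e i j) = ∑ i, -∑ e, c e j i :=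
      Finset.sum_congr rfl fun i _ => by rw [hCneg j i]
    rw [h4]
    have h5 : (∑ i, -∑ e, c e j i) = -∑ e, ∑ i, c e j i := by
      rw [Finset.sum_neg_distrib]
      congr 1
      exact Finset.sum_comm
    rw [h5]
    simp [hrow]
  have hP2 : (∑ e, ∑ i, ∑ j, dot (c e i j) (q j)) = 0 := by
    have hre : (∑ e, ∑ i, ∑ j, dot (c e i j) (q j))
        = ∑ j, dot (∑ e, ∑ i, c e i j) (q j) := by
      have s1 : (∑ e, ∑ i, ∑ j, dot (c e i j) (q j))
          = ∑ e, ∑ j, ∑ i, dot (c e i j) (q j) :=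
        Finset.sum_congr rfl fun e _ => Finset.sum_comm
      rw [s1, Finset.sum_comm]
      refine Finset.sum_congr rfl fun j _ => ?_
      rw [dot_sum_left]
      exact Finset.sum_congr rfl fun e _ => (dot_sum_left _ _).symm
    rw [hre]
    refine Finset.sum_eq_zero fun j _ => ?_
    rw [hCol j, dot_zero_left]
  -- piece P3 : the (q i) part vanishes
  have hP3 : (∑ e, ∑ i, ∑ j, dot (c e i j) (q i)) = 0 := by
    refine Finset.sum_eq_zero fun e _ => Finset.sum_eq_zero fun i _ => ?_
    rw [← dot_sum_left, hrow, dot_zero_left]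
  rw [hG, hQ, hP2, hP3]
  ring
end

section
/- Let d̃ > 0 and let m_i ≤ ū_{ij} ≤ M_i and m_j ≤ ū_{ji} ≤ M_j be real numbers. Let f̃ ∈ ℝ and define the limited flux f* := min{ f̃, 2d̃·min{ M_i − ū_{ij}, ū_{ji} − m_j } } if f̃ > 0, and f* := max{ f̃, 2d̃·max{ m_i − ū_{ij}, ū_{ji} − M_j } } otherwise. Then for every α ∈ [0, 1]: m_i ≤ ū_{ij} + α·f*/(2d̃) ≤ M_i and m_j ≤ ū_{ji} − α·f*/(2d̃) ≤ M_j. -/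
/-- Bound-preservation property of the monolithic convex limiting formula
(fij_lim): the limited bar states remain within the local bounds for any
limiting factor `α ∈ [0,1]`. -/
theorem convex_limiting_bound_preservation
    (dtil : ℝ) (hd : 0 < dtil)
    (mi Mi mj Mj ubarij ubarji : ℝ)
    (hij : mi ≤ ubarij ∧ ubarij ≤ Mi)
    (hji : mj ≤ ubarji ∧ ubarji ≤ Mj)
    (ftil fstar : ℝ)
    (hfstar : fstar =
      if 0 < ftil then
        min ftil (2 * dtil * min (Mi - ubarij) (ubarji - mj))
      else
        max ftil (2 * dtil * max (mi - ubarij) (ubarji - Mj))) :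
    ∀ α : ℝ, α ∈ Set.Icc (0 : ℝ) 1 →
      (mi ≤ ubarij + α * fstar / (2 * dtil) ∧
        ubarij + α * fstar / (2 * dtil) ≤ Mi) ∧
      (mj ≤ ubarji - α * fstar / (2 * dtil) ∧
        ubarji - α * fstar / (2 * dtil) ≤ Mj) := by
  obtain ⟨h1, h2⟩ := hij
  obtain ⟨h3, h4⟩ := hji
  intro α hα
  obtain ⟨hα0, hα1⟩ := hα
  have h2d : (0:ℝ) < 2 * dtil := by linarith
  have ht : α * fstar / (2 * dtil) * (2 * dtil) = α * fstar := by
    field_simp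
  set t := α * fstar / (2 * dtil) with htdef
  split_ifs at hfstar with hf
  · have hmA : min (Mi - ubarij) (ubarji - mj) ≤ Mi - ubarij := min_le_left _ _
    have hmB : min (Mi - ubarij) (ubarji - mj) ≤ ubarji - mj := min_le_right _ _
    have hm0 : (0:ℝ) ≤ min (Mi - ubarij) (ubarji - mj) :=
      le_min (by linarith) (by linarith)
    have hsle : fstar ≤ 2 * dtil * min (Mi - ubarij) (ubarji - mj) := by
      rw [hfstar]; exact min_le_right _ _
    have hs0 : 0 ≤ fstar := by
      rw [hfstar]; exact le_min hf.le (by positivity)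
    have haf0 : 0 ≤ α * fstar := mul_nonneg hα0 hs0
    have haf : α * fstar ≤ fstar := by nlinarith
    refine ⟨⟨?_, ?_⟩, ?_, ?_⟩ <;> nlinarith
  · have hmA : mi - ubarij ≤ max (mi - ubarij) (ubarji - Mj) := le_max_left _ _
    have hmB : ubarji - Mj ≤ max (mi - ubarij) (ubarji - Mj) := le_max_right _ _
    have hm0 : max (mi - ubarij) (ubarji - Mj) ≤ 0 :=
      max_le (by linarith) (by linarith)
    have hsge : 2 * dtil * max (mi - ubarij) (ubarji - Mj) ≤ fstar := by
      rw [hfstar]; exact le_max_right _ _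
    have hs0 : fstar ≤ 0 := by
      rw [hfstar]; exact max_le (not_lt.mp hf) (by nlinarith)
    have haf0 : α * fstar ≤ 0 := mul_nonpos_of_nonneg_of_nonpos hα0 hs0
    have haf : fstar ≤ α * fstar := by nlinarith
    refine ⟨⟨?_, ?_⟩, ?_, ?_⟩ <;> nlinarith
end

section
/- Let d be a positive integer and ι a finite index set. Let m̃, d̃ : ι × ι → ℝ be symmetric with zero row sums (Σ_j m̃_{ij} = 0 and Σ_j d̃_{ij} = 0 for all i), let c̃ : ι × ι → ℝ^d have zero row sums (Σ_j c̃_{ij} = 0 for all i), and let ẇ, u : ι → ℝ and F : ι → ℝ^d. Define the subcell fluxes f̃_{ij} := m̃_{ij}·(ẇ_j − ẇ_i) + d̃_{ij}·(u_i − u_j). Then: (a) f̃_{ij} + f̃_{ji} = 0 for all i, j (conservation); and (b) for every i, Σ_{j≠i} [ d̃_{ij}·(u_j − u_i) + f̃_{ij} − c̃_{ij}·(F_j − F_i) ] = Σ_j m̃_{ij}·ẇ_j − Σ_j c̃_{ij}·F_j. In particular, if the flux potentials ẇ solve Σ_j m̃_{ij}·ẇ_j = r_i for a given right-hand side r : ι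 → ℝ, then the compact-stencil sum equals r_i − Σ_j c̃_{ij}·F_j. -/
/-- Equivalence of the compact-stencil scheme (fcorr) with raw antidiffusive
subcell fluxes (subcell) and the stabilized high-order target scheme (target):
the subcell fluxes are conservative and the compact-stencil sum reduces to
`Σ_j m̃_{ij} ẇ_j − Σ_j c̃_{ij}·F_j`. -/
theorem subcell_flux_decomposition
    (d : ℕ) (hd : 0 < d) {ι : Type*} [Fintype ι] [DecidableEq ι]
    (mtil dtil : ι → ι → ℝ)
    (hmsym : ∀ i j, mtil i j = mtil j i) (hmrow : ∀ i, ∑ j, mtil i j = 0)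
    (hdsym : ∀ i j, dtil i j = dtil j i) (hdrow : ∀ i, ∑ j, dtil i j = 0)
    (ctil : ι → ι → Fin d → ℝ) (hcrow : ∀ i, ∑ j, ctil i j = 0)
    (wdot u : ι → ℝ) (F : ι → Fin d → ℝ)
    (ftil : ι → ι → ℝ)
    (hftil : ∀ i j, ftil i j = mtil i j * (wdot j - wdot i) +
      dtil i j * (u i - u j)) :
    (∀ i j, ftil i j + ftil j i = 0) ∧
    (∀ i, ∑ j ∈ Finset.univ.erase i,
        (dtil i j * (u j - u i) + ftil i j - dot (ctil i j) (F j - F i)) =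
      ∑ j, mtil i j * wdot j - ∑ j, dot (ctil i j) (F j)) ∧
    (∀ r : ι → ℝ, (∀ i, ∑ j, mtil i j * wdot j = r i) →
      ∀ i, ∑ j ∈ Finset.univ.erase i,
          (dtil i j * (u j - u i) + ftil i j - dot (ctil i j) (F j - F i)) =
        r i - ∑ j, dot (ctil i j) (F j)) := by
  have hdot0 : ∀ (i : ι) (v : Fin d → ℝ), ∑ j, dot (ctil i j) v = 0 := by
    intro i v
    have h1 : ∑ j, dot (ctil i j) v = dot (∑ j, ctil i j) v := by
      simp only [dot, Finset.sum_apply, Finset.sum_mul]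
      exact Finset.sum_comm
    rw [h1, hcrow]
    simp [dot]
  have main : ∀ i, ∑ j ∈ Finset.univ.erase i,
      (dtil i j * (u j - u i) + ftil i j - dot (ctil i j) (F j - F i)) =
      ∑ j, mtil i j * wdot j - ∑ j, dot (ctil i j) (F j) := by
    intro i
    rw [Finset.sum_erase _ (by simp [hftil, dot])]
    have hterm : ∀ j, dtil i j * (u j - u i) + ftil i j - dot (ctil i j) (F j - F i)
        = mtil i j * wdot j - mtil i j * wdot i - dot (ctil i j) (F j)
          + dot (ctil i j) (F i) := by
      intro j
      have hs : dot (ctil i j) (F j - F i)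
          = dot (ctil i j) (F j) - dot (ctil i j) (F i) := by
        simp [dot, mul_sub, Finset.sum_sub_distrib]
      rw [hftil, hs]; ring
    rw [Finset.sum_congr rfl fun j _ => hterm j]
    rw [Finset.sum_add_distrib, Finset.sum_sub_distrib, Finset.sum_sub_distrib,
        ← Finset.sum_mul, hmrow, hdot0]
    ring
  exact ⟨fun i j => by rw [hftil, hftil, hmsym j i, hdsym j i]; ring,
    main, fun r hr i => by rw [main i, hr i]⟩
end
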